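/- Let X be a T1 topological space, K and F closed subsets of X such that K ∩ F = K ∩ int(F). Then for every ordinal α, (K ∩ F)^(α) = K^(α) ∩ F. -/

import Mathlib

/-- The Cantor-Bendixson derivative of a set, by transfinite recursion. -/
noncomputable def cbDeriv {X : Type*} [TopologicalSpace X] (A : Set X) (o : Ordinal) : Set X :=
  Ordinal.limitRecOn o A (fun _ ih => derivedSet ih)
    (fun o _ ih => ⋂ (b : Set.Iio o), ih b.1 b.2)

/-- `IsCB A α p` : the Cantor-Bendixson characteristic of `A` is `(α, p)`,
i.e. `α` is the least ordinal with `A^(α)` finite, and `p = |A^(α)|`. -/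
def IsCB {X : Type*} [TopologicalSpace X] (A : Set X) (α : Ordinal) (p : ℕ) : Prop :=
  (cbDeriv A α).Finite ∧ (∀ β < α, ¬ (cbDeriv A β).Finite) ∧ (cbDeriv A α).ncard = p

/-!
At a point of `int F` the set `A ∩ F` accumulates exactly where `A` does, and the hypothesis
puts every point of `K^(α) ∩ F` into `int F`, since `K^(α) ⊆ K`. So taking the derived set
commutes with `· ∩ F` at each successor step; at limit steps `· ∩ F` commutes with the
intersection.
-/

open Set Topology

section

variable {X : Type*} [TopologicalSpace X]

lemma derivedSet_inter_eq_of_closure_inter_subset_interior {A F : Set X} (hF : IsClosed F)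
    (h : closure A ∩ F ⊆ interior F) : derivedSet (A ∩ F) = derivedSet A ∩ F := by
  refine Subset.antisymm (fun x hx => ⟨derivedSet_mono _ _ inter_subset_left hx, ?_⟩) ?_
  · exact hF.closure_subset (closure_mono inter_subset_right (derivedSet_subset_closure _ hx))
  · rintro x ⟨hx, hxF⟩
    have hF_nhds : F ∈ 𝓝 x :=
      mem_interior_iff_mem_nhds.mp (h ⟨derivedSet_subset_closure _ hx, hxF⟩)
    rw [inter_comm]
    exact hx.nhds_inter hF_nhds

lemma cbDeriv_zero (A : Set X) : cbDeriv A 0 = A := by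
  simp [cbDeriv]

lemma cbDeriv_succ (A : Set X) (o : Ordinal) :
    cbDeriv A (Order.succ o) = derivedSet (cbDeriv A o) := by
  simp [cbDeriv]

lemma cbDeriv_limit (A : Set X) {o : Ordinal} (ho : Order.IsSuccLimit o) :
    cbDeriv A o = ⋂ b : Iio o, cbDeriv A b := by
  simp [cbDeriv, Ordinal.limitRecOn_limit _ _ _ _ ho]

lemma cbDeriv_subset_closure (A : Set X) (α : Ordinal) : cbDeriv A α ⊆ closure A := by
  induction α using Ordinal.limitRecOn with
  | zero => rw [cbDeriv_zero]; exact subset_closure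
  | add_one o ih =>
    rw [← Order.succ_eq_add_one, cbDeriv_succ]
    exact (derivedSet_subset_closure _).trans (closure_minimal ih isClosed_closure)
  | limit o ho _ =>
    rw [cbDeriv_limit _ ho]
    exact (iInter_subset _ ⟨0, ho.pos⟩).trans (by rw [cbDeriv_zero]; exact subset_closure)

end

theorem stmt8_general {X : Type*} [TopologicalSpace X] (K F : Set X)
    (hK : IsClosed K) (hF : IsClosed F) (h : K ∩ F = K ∩ interior F) (α : Ordinal) :
    cbDeriv (K ∩ F) α = cbDeriv K α ∩ F := by
  induction α using Ordinal.limitRecOn with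
  | zero => simp only [cbDeriv_zero]
  | add_one o ih =>
    have hKo : closure (cbDeriv K o) ⊆ K :=
      closure_minimal ((cbDeriv_subset_closure K o).trans hK.closure_subset) hK
    rw [← Order.succ_eq_add_one, cbDeriv_succ, cbDeriv_succ, ih]
    refine derivedSet_inter_eq_of_closure_inter_subset_interior hF fun x hx => ?_
    exact (h.subset ⟨hKo hx.1, hx.2⟩).2
  | limit o ho ih =>
    have : Nonempty (Iio o) := ⟨⟨0, ho.pos⟩⟩
    rw [cbDeriv_limit _ ho, cbDeriv_limit _ ho, iInter_inter]
    exact iInter_congr fun b => ih b.1 b.2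

theorem stmt8 {X : Type*} [TopologicalSpace X] [T1Space X] (K F : Set X)
    (hK : IsClosed K) (hF : IsClosed F) (h : K ∩ F = K ∩ interior F) (α : Ordinal) :
    cbDeriv (K ∩ F) α = cbDeriv K α ∩ F :=
  stmt8_general K F hK hF h α
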